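/- Let σ = ⊗ₙ ad(uₙ) be the shift automorphism on the universal UHF algebra 𝒰 = ⊗_{n≥1} Mₙ, where uₙ ∈ Mₙ is the cyclic permutation unitary with uₙ* e^{(n)}_{i,i} uₙ = e^{(n)}_{i+1,i+1} (indices mod n). Then σ has the cyclic Rokhlin property: for any integer k > 0, any ε > 0 and any finite subset F ⊂ 𝒰, there exist mutually orthogonal projections e₁, ..., e_k ∈ 𝒰 with Σᵢeᵢ = 1, ‖x eᵢ − eᵢ x‖ < ε for all x ∈ F, and σ(eᵢ) = e_{i+1} exactly for i = 1, ..., k (with e_{k+1} = e₁). -/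

import Mathlib

/-!
STATEMENT 16: The shift automorphism `σ = ⊗ₙ ad(uₙ)` of the universal UHF algebra
`𝒰 = ⊗_{n≥1} Mₙ` has the cyclic Rokhlin property, with the projections permuted
*exactly*: `σ(eᵢ) = e_{i+1}`.  The universal UHF algebra with its shift is presented
abstractly as a C*-algebra with commuting unital embeddings of all matrix algebras
whose union is dense, and an automorphism conjugating each factor by the cyclic
permutation unitary.
-/

open scoped Matrix.Norms.L2Operator BigOperators

noncomputable instance (n : ℕ) : CStarAlgebra (Matrix (Fin n) (Fin n) ℂ) :=
  { Matrix.instL2OpNormedRing, Matrix.instCStarRing, Matrix.instL2OpNormedAlgebra with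
    star_mul := star_mul
    star_add := star_add
    complete := CompleteSpace.complete
    star_smul := star_smul }

/-- The cyclic permutation matrix `uₙ ∈ Mₙ₊₁` with `uₙ* e_{i,i} uₙ = e_{i+1,i+1}`. -/
def cyclicPermMatrix (n : ℕ) : Matrix (Fin (n + 1)) (Fin (n + 1)) ℂ :=
  fun i j => if i = j + 1 then 1 else 0

/-- The universal UHF algebra `𝒰 = ⊗_{n ≥ 1} Mₙ` together with its shift
automorphism `σ = ⊗ₙ ad(uₙ)`, presented abstractly. -/
structure UHFShift (U : Type*) [CStarAlgebra U] where
  ι : ∀ n : ℕ, Matrix (Fin (n + 1)) (Fin (n + 1)) ℂ →⋆ₐ[ℂ] U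
  inj : ∀ n, Function.Injective (ι n)
  commuting : ∀ m n, m ≠ n → ∀ x y, Commute (ι m x) (ι n y)
  dense : Dense ((StarAlgebra.adjoin ℂ (⋃ n, Set.range (ι n)) : StarSubalgebra ℂ U) : Set U)
  σ : U ≃⋆ₐ[ℂ] U
  shift : ∀ n x, σ (ι n x) =
    ι n (star (cyclicPermMatrix n) * x * cyclicPermMatrix n)

/-- A projection in a C*-algebra. -/
def IsProjection {A : Type*} [CStarAlgebra A] (p : A) : Prop := p * p = p ∧ star p = p

/-!
Every element of the *-algebra generated by the factors commutes with all factors from some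
index on, so after approximating `F` within `ε / 2` it suffices to build the projections inside a
single late factor `M_{m+1}` with `k ∣ m + 1`. There `eᵢ` is the diagonal projection onto the
basis vectors `a ≡ -i (mod k)`: conjugation by the cyclic permutation shifts the diagonal by one,
and since `k ∣ m + 1` the residue map `Fin (m + 1) → ZMod k` is compatible with that shift, so
`σ (eᵢ) = e_{i+1}` holds exactly.
-/

open Filter

namespace Matrix

variable {n ι R : Type*} [DecidableEq n] [DecidableEq ι] [Semiring R]

def fiberProjection (c : n → ι) (i : ι) : Matrix n n R :=
  diagonal fun a => if c a = i then 1 else 0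

theorem isStarProjection_fiberProjection [Fintype n] [StarRing R] (c : n → ι) (i : ι) :
    IsStarProjection (fiberProjection (R := R) c i) := by
  refine isStarProjection_iff'.2 ⟨?_, ?_⟩
  · rw [fiberProjection, diagonal_mul_diagonal]
    congr 1; ext a; split_ifs <;> simp
  · rw [fiberProjection, star_eq_conjTranspose, diagonal_conjTranspose]
    congr 1; ext a; split_ifs <;> simp [*]

theorem fiberProjection_mul_fiberProjection_of_ne [Fintype n] (c : n → ι) {i j : ι}
    (hij : i ≠ j) :
    fiberProjection (R := R) c i * fiberProjection c j = 0 := by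
  rw [fiberProjection, fiberProjection, diagonal_mul_diagonal, ← diagonal_zero]
  congr 1; ext a; split_ifs <;> simp_all

theorem sum_fiberProjection [Fintype ι] (c : n → ι) :
    ∑ i, fiberProjection (R := R) c i = 1 := by
  ext a b
  simp [fiberProjection, Matrix.sum_apply, diagonal_apply, one_apply]

end Matrix

theorem cyclicPermMatrix_conj_diagonal (n : ℕ) (f : Fin (n + 1) → ℂ) :
    star (cyclicPermMatrix n) * Matrix.diagonal f * cyclicPermMatrix n =
      Matrix.diagonal fun a => f (a + 1) := by
  ext a b
  simp only [Matrix.mul_apply, Matrix.star_apply, cyclicPermMatrix, RCLike.star_def,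
    MonoidWithZeroHom.map_ite_one_zero, Matrix.diagonal_apply, mul_ite, ite_mul, one_mul, zero_mul,
    mul_zero, Finset.sum_ite_eq', Finset.mem_univ, ↓reduceIte, mul_one, add_left_inj]
  grind

theorem ZMod.natCast_finVal_add_one {k m : ℕ} (h : k ∣ m + 1) (a : Fin (m + 1)) :
    (((a + 1 : Fin (m + 1)) : ℕ) : ZMod k) = a + 1 := by
  have : ((a + 1 : Fin (m + 1)) : ℕ) ≡ a + 1 [MOD m + 1] := by
    simp [Fin.val_add, Nat.ModEq, Nat.add_mod]
  exact_mod_cast (ZMod.natCast_eq_natCast_iff _ _ _).2 (this.of_dvd h)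

theorem norm_mul_sub_mul_le_of_commute {A : Type*} [NormedRing A] {x y p : A}
    (h : Commute y p) :
    ‖x * p - p * x‖ ≤ 2 * ‖p‖ * ‖x - y‖ := by
  have : x * p - p * x = (x - y) * p - p * (x - y) := by
    rw [sub_mul, mul_sub, h.eq]; abel
  calc ‖x * p - p * x‖ ≤ ‖(x - y) * p‖ + ‖p * (x - y)‖ := this ▸ norm_sub_le _ _
    _ ≤ ‖x - y‖ * ‖p‖ + ‖p‖ * ‖x - y‖ :=
      add_le_add (norm_mul_le _ _) (norm_mul_le _ _)
    _ = 2 * ‖p‖ * ‖x - y‖ := by ring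

theorem Nat.frequently_atTop_dvd_succ {k : ℕ} (hk : k ≠ 0) : ∃ᶠ m in atTop, k ∣ m + 1 :=
  frequently_atTop.2 fun N => ⟨k * (N + 1) - 1, by
    have := Nat.le_mul_of_pos_left (N + 1) (Nat.pos_of_ne_zero hk); omega, by
    rw [Nat.sub_add_cancel (Nat.mul_pos (Nat.pos_of_ne_zero hk) N.succ_pos)]
    exact dvd_mul_right _ _⟩

def tailCommutant {R U : Type*} [CommSemiring R] [StarRing R] [Semiring U] [StarRing U]
    [Algebra R U] [StarModule R U] {A : ℕ → Type*} [∀ n, Semiring (A n)]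
    [∀ n, StarRing (A n)] [∀ n, Algebra R (A n)] (ι : ∀ n, A n →⋆ₐ[R] U) :
    StarSubalgebra R U where
  carrier := {a | ∀ᶠ m in atTop, ∀ z, Commute a (ι m z)}
  mul_mem' ha hb := (ha.and hb).mono fun _ h z => (h.1 z).mul_left (h.2 z)
  add_mem' ha hb := (ha.and hb).mono fun _ h z => (h.1 z).add_left (h.2 z)
  algebraMap_mem' r := Eventually.of_forall fun _ z => Algebra.commutes r _
  star_mem' ha := ha.mono fun _ h z => by
    simpa only [map_star, star_star] using (h (star z)).star_star

namespace UHFShift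

variable {U : Type*} [CStarAlgebra U] (S : UHFShift U)

theorem adjoin_le_tailCommutant :
    StarAlgebra.adjoin ℂ (⋃ n, Set.range (S.ι n)) ≤ tailCommutant S.ι :=
  StarAlgebra.adjoin_le <| Set.iUnion_subset fun n => Set.range_subset_iff.2 fun x =>
    (eventually_gt_atTop n).mono fun _ hm z => S.commuting n _ hm.ne x z

theorem eventually_forall_exists_near_commute (F : Finset U) {δ : ℝ} (hδ : 0 < δ) :
    ∀ᶠ m in atTop, ∀ x ∈ F, ∃ y, ‖x - y‖ < δ ∧ ∀ z, Commute y (S.ι m z) := by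
  refine (eventually_all_finset F).2 fun x _ => ?_
  obtain ⟨y, hy, hxy⟩ := Metric.mem_closure_iff.1 (S.dense x) δ hδ
  exact (S.adjoin_le_tailCommutant hy).mono fun _ h => ⟨y, by rwa [← dist_eq_norm], h⟩

end UHFShift

def cyclicColoring (k m : ℕ) : Fin (m + 1) → ZMod k := fun a => -((a : ℕ) : ZMod k)

theorem cyclicPermMatrix_conj_fiberProjection {k m : ℕ} (h : k ∣ m + 1) (i : ZMod k) :
    star (cyclicPermMatrix m) * Matrix.fiberProjection (cyclicColoring k m) i *
        cyclicPermMatrix m = Matrix.fiberProjection (cyclicColoring k m) (i + 1) := by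
  rw [Matrix.fiberProjection, cyclicPermMatrix_conj_diagonal, Matrix.fiberProjection]
  congr 1; ext a
  -- the rewritten condition carries a different `Decidable` instance, hence `if_congr`
  exact if_congr (by simp only [cyclicColoring, ZMod.natCast_finVal_add_one h, neg_add',
    sub_eq_iff_eq_add]) rfl rfl

theorem uhf_shift_cyclic_rokhlin (U : Type*) [CStarAlgebra U] (S : UHFShift U) :
    ∀ (k : ℕ) [NeZero k], ∀ ε : ℝ, 0 < ε → ∀ F : Finset U,
      ∃ e : ZMod k → U,
        (∀ i, IsProjection (e i)) ∧
        (∀ i j, i ≠ j → e i * e j = 0) ∧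
        (∑ i, e i) = 1 ∧
        (∀ x ∈ F, ∀ i, ‖x * e i - e i * x‖ < ε) ∧
        (∀ i, S.σ (e i) = e (i + 1)) := by
  intro k _ ε hε F
  obtain ⟨m, hnear, hkm⟩ :=
    ((S.eventually_forall_exists_near_commute F (half_pos hε)).and_frequently
      (Nat.frequently_atTop_dvd_succ (NeZero.ne k))).exists
  let P := Matrix.fiberProjection (R := ℂ) (cyclicColoring k m)
  have hP i : IsStarProjection (S.ι m (P i)) :=
    (Matrix.isStarProjection_fiberProjection _ i).map (S.ι m)
  refine ⟨fun i => S.ι m (P i), fun i => isStarProjection_iff'.1 (hP i), fun i j hij => ?_, ?_,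
    fun x hx i => ?_, fun i => ?_⟩
  · rw [← map_mul, Matrix.fiberProjection_mul_fiberProjection_of_ne _ hij, map_zero]
  · rw [← map_sum, Matrix.sum_fiberProjection, map_one]
  · obtain ⟨y, hxy, hy⟩ := hnear x hx
    calc _ ≤ 2 * ‖S.ι m (P i)‖ * ‖x - y‖ := norm_mul_sub_mul_le_of_commute (hy _)
      _ ≤ 2 * 1 * ‖x - y‖ := by gcongr; exact (hP i).norm_le
      _ < ε := by linarith
  · rw [S.shift, cyclicPermMatrix_conj_fiberProjection hkm]
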